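/- Classical RAC bound: for any classical encoding of n-dit strings (d^n inputs) into messages, the RAC success metric S_C(n,d) and the distinguishability D_C = (1/d^n)·∑_m max_x p_e(m|x) satisfy n·S_C + 1 − n ≤ D_C, where S_C = (1/(n d^n))·∑_m ∑_{y=1}^n max_{v∈[d]} ∑_{x : x_y = v} p_e(m|x). -/

import Mathlib

/-!
Fix a message `m` and, for each coordinate `y`, a value `v y` attaining the maximum in the
definition of `S`. Summing over `y` counts each input `x` with weight `p m x` once per coordinate
on which it agrees with `v`. That is at most `n - 1` times unless `x = v`, so the sum is at most
`(n - 1) ∑ₓ p m x + p m v ≤ (n - 1) ∑ₓ p m x + maxₓ p m x`. Summing over `m` and using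
`∑ₘ ∑ₓ p m x = dⁿ` gives the claim.
-/

open Finset

section Agreement

variable {ι α : Type*} [Fintype ι] [DecidableEq α]

lemma card_filter_eq_add_one_le_of_ne {x v : ι → α} (hxv : x ≠ v) :
    #{y | x y = v y} + 1 ≤ Fintype.card ι := by
  obtain ⟨y₀, hy₀⟩ := Function.ne_iff.mp hxv
  exact card_lt_univ_of_notMem (x := y₀) (by simpa using hy₀)

lemma card_filter_eq_mul_le {w : (ι → α) → ℝ} (hw : ∀ x, 0 ≤ w x) (x v : ι → α) :
    (#{y | x y = v y} : ℝ) * w x ≤ (Fintype.card ι - 1) * w x + if x = v then w x else 0 := by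
  by_cases hxv : x = v
  · subst hxv
    have hcard : #{y | x y = x y} = Fintype.card ι := by simp
    rw [hcard, if_pos rfl]
    linarith
  · have hcard : (#{y | x y = v y} : ℝ) ≤ Fintype.card ι - 1 := by
      have := card_filter_eq_add_one_le_of_ne hxv
      rw [le_sub_iff_add_le]
      exact_mod_cast this
    rw [if_neg hxv, add_zero]
    exact mul_le_mul_of_nonneg_right hcard (hw x)

variable [DecidableEq ι] [Fintype α]

lemma sum_sum_filter_apply_eq_le {w : (ι → α) → ℝ} (hw : ∀ x, 0 ≤ w x) (v : ι → α) :
    ∑ y, ∑ x with x y = v y, w x ≤ (Fintype.card ι - 1) * ∑ x, w x + w v := by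
  calc ∑ y, ∑ x with x y = v y, w x
      = ∑ x, (#{y | x y = v y} : ℝ) * w x := by
        simp_rw [sum_filter]
        rw [sum_comm]
        refine sum_congr rfl fun x _ => ?_
        rw [← sum_filter, sum_const, nsmul_eq_mul]
    _ ≤ ∑ x, ((Fintype.card ι - 1) * w x + if x = v then w x else 0) :=
        sum_le_sum fun x _ => card_filter_eq_mul_le hw x v
    _ = (Fintype.card ι - 1) * ∑ x, w x + w v := by
        rw [sum_add_distrib, ← mul_sum, sum_ite_eq' univ v]
        simp

lemma sum_sup'_sum_filter_apply_eq_le [Nonempty α]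
    {w : (ι → α) → ℝ} (hw : ∀ x, 0 ≤ w x) :
    ∑ y, univ.sup' univ_nonempty (fun a => ∑ x with x y = a, w x)
      ≤ (Fintype.card ι - 1) * ∑ x, w x + univ.sup' univ_nonempty w := by
  choose v _ hv using fun y : ι =>
    exists_mem_eq_sup' univ_nonempty (fun a => ∑ x with x y = a, w x)
  calc ∑ y, univ.sup' univ_nonempty (fun a => ∑ x with x y = a, w x)
      = ∑ y, ∑ x with x y = v y, w x := sum_congr rfl fun y _ => hv y
    _ ≤ (Fintype.card ι - 1) * ∑ x, w x + w v := sum_sum_filter_apply_eq_le hw v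
    _ ≤ (Fintype.card ι - 1) * ∑ x, w x + univ.sup' univ_nonempty w := by
        gcongr
        exact le_sup' w (mem_univ v)

end Agreement

theorem rac_classical_bound
    (n d : ℕ) (hd : 2 ≤ d)
    (M : Type*) [Fintype M]
    (p : M → (Fin n → Fin d) → ℝ)
    (hp : ∀ m x, 0 ≤ p m x) (hsum : ∀ x, ∑ m, p m x = 1)
    (S D : ℝ)
    (hS : haveI : Nonempty (Fin d) := Fin.pos_iff_nonempty.mp (by omega)
      S = (1 / (n * d ^ n : ℝ)) * ∑ m, ∑ y : Fin n,
        Finset.univ.sup' Finset.univ_nonempty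
          (fun v : Fin d => ∑ x ∈ Finset.univ.filter (fun x : Fin n → Fin d => x y = v), p m x))
    (hD : haveI : Nonempty (Fin n → Fin d) := ⟨fun _ => ⟨0, by omega⟩⟩
      D = (1 / (d ^ n : ℝ)) * ∑ m, Finset.univ.sup' Finset.univ_nonempty (p m)) :
    n * S + 1 - n ≤ D := by
  have : Nonempty (Fin d) := Fin.pos_iff_nonempty.mp (by omega)
  set A := ∑ m, ∑ y : Fin n,
    univ.sup' univ_nonempty (fun v : Fin d => ∑ x with x y = v, p m x)
  set B := ∑ m, univ.sup' univ_nonempty (p m)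
  have hdpos : (0 : ℝ) < d ^ n := by positivity
  have htotal : ∑ m, ∑ x : Fin n → Fin d, p m x = d ^ n := by
    rw [sum_comm]
    simp [hsum]
  have hAB : A ≤ (n - 1) * d ^ n + B := by
    calc A ≤ ∑ m, ((n - 1) * ∑ x : Fin n → Fin d, p m x + univ.sup' univ_nonempty (p m)) :=
          sum_le_sum fun m _ => by
            simpa using sum_sup'_sum_filter_apply_eq_le (hp m)
      _ = (n - 1) * d ^ n + B := by rw [sum_add_distrib, ← mul_sum, htotal]
  -- For `n = 0` both sides vanish: `A` is an empty sum over `Fin 0`.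
  have hnS : n * S = A / d ^ n := by
    rcases eq_or_ne n 0 with rfl | hn
    · simp [hS, A]
    · rw [hS]
      field_simp
  rw [hnS, hD, one_div_mul_eq_div, div_add' _ _ _ hdpos.ne', div_sub' hdpos.ne',
    div_le_div_iff_of_pos_right hdpos]
  linarith
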